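/- arXiv:1911.12627 — 5 statements merged into one kernel-verified Lean document; each statement's English description precedes it below -/
import Mathlib

section
/- Let v ∈ R^m and let F = {r ∈ Z^m : ⟨v,r⟩ = 0} be the subgroup of integer vectors orthogonal to v. Then the rank of F as a free Z-module equals m minus the dimension over Q of the Q-span of the components v^1,...,v^m of v. -/
/-!
`F` is the kernel of the `ℤ`-linear map `r ↦ ⟨v, r⟩` from `ℤ^m` to `ℝ`, whose image is the
`ℤ`-span of the components of `v`; rank-nullity over `ℤ` gives `rank F = m - rank (span ℤ v)`.
The `ℚ`-span of a set in a `ℚ`-vector space is the localization of its `ℤ`-span at `ℤ ∖ {0}`,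
so both spans have the same rank.
-/

open Module nonZeroDivisors Submodule

theorem Submodule.finrank_span_eq_finrank_span_of_isFractionRing {R K V : Type*}
    [CommRing R] [CommRing K] [Algebra R K] [IsFractionRing R K]
    [AddCommGroup V] [Module K V] [Module R V] [IsScalarTower R K V] (s : Set V) :
    finrank R (span R s) = finrank K (span K s) := by
  have := isLocalizedModule_id R⁰ V K
  have hloc := IsLocalizedModule.finrank_eq R⁰ ((span R s).toLocalized' K R⁰ LinearMap.id) le_rfl
  rw [localized'_span, LinearMap.id_coe, Set.image_id] at hloc
  rw [← hloc, IsFractionRing.finrank_right_eq R K]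

universe u in
theorem LinearMap.finrank_range_add_finrank_ker_of_hasRankNullity {R : Type*} {M : Type u}
    {N : Type*} [Ring R] [AddCommGroup M] [AddCommGroup N] [Module R M] [Module R N]
    [HasRankNullity.{u} R] [StrongRankCondition R] [Module.Finite R M] (f : M →ₗ[R] N) :
    finrank R (LinearMap.range f) + finrank R (LinearMap.ker f) = finrank R M := by
  rw [← f.quotKerEquivRange.finrank_eq, (LinearMap.ker f).finrank_quotient_add_finrank]

/-- For `v ∈ ℝ^m`, the rank of the free `ℤ`-module
`F = {r ∈ ℤ^m : ⟨v, r⟩ = 0}` equals `m` minus the dimension over `ℚ` of the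
`ℚ`-span of the components of `v`. -/
theorem rank_integer_orthogonal_complement (m : ℕ) (v : Fin m → ℝ)
    (F : Submodule ℤ (Fin m → ℤ))
    (hF : ∀ r : Fin m → ℤ, r ∈ F ↔ ∑ i, v i * (r i : ℝ) = 0) :
    Module.finrank ℤ F = m - Module.finrank ℚ (Submodule.span ℚ (Set.range v)) := by
  set g : (Fin m → ℤ) →ₗ[ℤ] ℝ := Fintype.linearCombination ℤ v
  have hker : F = LinearMap.ker g := by
    ext r
    simp [hF, g, Fintype.linearCombination_apply, zsmul_eq_mul, mul_comm]
  have hrank := g.finrank_range_add_finrank_ker_of_hasRankNullity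
  rw [Fintype.range_linearCombination, finrank_span_eq_finrank_span_of_isFractionRing (K := ℚ),
    finrank_fin_fun, ← hker] at hrank
  omega
end

section
/- Let c_0, c_1, c_2 ∈ R and define S: R^3 → so(3) by S(e_0) = c_0·E_{12}, S(e_1) = -c_1·E_{02}, S(e_2) = c_2·E_{01}, where E_{ij} = e^i⊗e_j - e^j⊗e_i. Define linear maps R^k: ⊗^k R^3 ⊗ Λ²R^3 → so(3) recursively by specifying R^0 diagonal with R^0(e_0∧e_1) = (-c_0c_1+c_1c_2+c_0c_2)E_{01}, R^0(e_1∧e_2) = (c_0c_1-c_1c_2+c_0c_2)E_{12}, R^0(e_0∧e_2) = (c_0c_1+c_1c_2-c_0c_2)E_{02}, and R^{k+1}(X, V_1,...,V_k | ·) = -(S(X)·R^k)(V_1,...,V_k | ·), where A·P denotes the natural so(3)-derivation action. Then for all k ≥ 1, with b(k) = 1 + (k mod 2): R^k(e_0,...,e_0 | e_0∧e_1) = (-1)^{⌊(k-1)/2⌋}·2^k·c_0^{k+1}·(c_1-c_2)·E_{0,b(k)}, R^k(e_0,...,e_0 | e_0∧e_2) = (-1)^{⌊k/2⌋}·2^k·c_0^{k+1}·(c_1-c_2)·E_{0,b(k+1)},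 and R^k(e_0,...,e_0 | e_1∧e_2) = 0. -/
open Matrix

/-- Standard basis vector of `ℝ³`. -/
noncomputable def e (i : Fin 3) : Fin 3 → ℝ := Pi.single i 1

/-- `E₀₁ = e⁰⊗e₁ - e¹⊗e₀ ∈ so(3)`. -/
def E01 : Matrix (Fin 3) (Fin 3) ℝ := !![0, -1, 0; 1, 0, 0; 0, 0, 0]

/-- `E₀₂ = e⁰⊗e₂ - e²⊗e₀ ∈ so(3)`. -/
def E02 : Matrix (Fin 3) (Fin 3) ℝ := !![0, 0, -1; 0, 0, 0; 1, 0, 0]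

/-- `E₁₂ = e¹⊗e₂ - e²⊗e₁ ∈ so(3)`. -/
def E12 : Matrix (Fin 3) (Fin 3) ℝ := !![0, 0, 0; 0, 0, -1; 0, 1, 0]

/-! Along `e₀` the derivation acts through `S(e₀) = c₀ E₁₂`, which kills `e₀` and rotates
`e₁ ↦ e₂ ↦ -e₁`. So the values `A k`, `B k`, `C k` of `R^k(e₀, …, e₀ | ·)` on `e₀∧e₁`, `e₀∧e₂`,
`e₁∧e₂` satisfy `A (k+1) = -c₀[E₁₂, A k] + c₀ B k`, `B (k+1) = -c₀[E₁₂, B k] - c₀ A k` and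
`C (k+1) = -c₀[E₁₂, C k]`; the terms `R^k(e₁∧e₁)`, `R^k(e₂∧e₂)` drop out because antisymmetry in
the `Λ²` slot propagates from `R^0`. As `ad E₁₂` rotates `E₀₁ ↦ E₀₂ ↦ -E₀₁` and fixes `E₁₂`,
`C` vanishes from `k = 1` on, while `A` and `B` alternate between multiples of `E₀₁` and `E₀₂`
whose coefficient gains a factor `2c₀` at each step. -/

attribute [local instance] LieRing.ofAssociativeRing

theorem neg_one_pow_mul_neg_one_pow_div_two {M : Type*} [Monoid M] [HasDistribNeg M] (k : ℕ) :
    (-1 : M) ^ k * (-1) ^ (k / 2) = (-1) ^ ((k + 1) / 2) := by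
  obtain ⟨m, rfl | rfl⟩ := Nat.even_or_odd' k
  · rw [Nat.mul_div_cancel_left m two_pos, show (2 * m + 1) / 2 = m by omega, pow_mul, neg_one_sq,
      one_pow, one_mul]
  · rw [show (2 * m + 1) / 2 = m by omega, show (2 * m + 1 + 1) / 2 = m + 1 by omega, pow_succ,
      pow_mul, neg_one_sq, one_pow, one_mul, pow_succ']

theorem lie_E12_E01 : ⁅E12, E01⁆ = E02 := by
  ext i j
  fin_cases i <;> fin_cases j <;> simp [Ring.lie_def, E01, E02, E12]

theorem lie_E12_E02 : ⁅E12, E02⁆ = -E01 := by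
  ext i j
  fin_cases i <;> fin_cases j <;> simp [Ring.lie_def, E01, E02, E12]

theorem E12_mulVec_e0 : E12 *ᵥ e 0 = 0 := by
  ext i; fin_cases i <;> simp [E12, e]

theorem E12_mulVec_e1 : E12 *ᵥ e 1 = e 2 := by
  ext i; fin_cases i <;> simp [E12, e]

theorem E12_mulVec_e2 : E12 *ᵥ e 2 = -e 1 := by
  ext i; fin_cases i <;> simp [E12, e]

/-- `E_{0,b(k)}` with `b(k) = 1 + (k mod 2)`. -/
def E0b (k : ℕ) : Matrix (Fin 3) (Fin 3) ℝ := if k % 2 = 1 then E02 else E01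

theorem E0b_add_two (k : ℕ) : E0b (k + 2) = E0b k := by
  simp only [E0b, Nat.add_mod_right]

theorem lie_E12_E0b (k : ℕ) : ⁅E12, E0b k⁆ = (-1 : ℝ) ^ k • E0b (k + 1) := by
  obtain ⟨m, rfl | rfl⟩ := Nat.even_or_odd' k
  · simp [E0b, Nat.add_mod, lie_E12_E01, pow_mul]
  · simp [E0b, Nat.add_mod, lie_E12_E02, pow_succ, pow_mul]

theorem closed_form_of_rotation_recursion (c0 d : ℝ) (A B : ℕ → Matrix (Fin 3) (Fin 3) ℝ)
    (hA : ∀ k, A (k + 1) = -c0 • ⁅E12, A k⁆ + c0 • B k)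
    (hB : ∀ k, B (k + 1) = -c0 • ⁅E12, B k⁆ - c0 • A k)
    (hA1 : A 1 = (2 * c0 ^ 2 * d) • E02) (hB1 : B 1 = (2 * c0 ^ 2 * d) • E01) (j : ℕ) :
    A (j + 1) = ((-1 : ℝ) ^ (j / 2) * 2 ^ (j + 1) * c0 ^ (j + 2) * d) • E0b (j + 1) ∧
      B (j + 1) = ((-1 : ℝ) ^ ((j + 1) / 2) * 2 ^ (j + 1) * c0 ^ (j + 2) * d) • E0b (j + 2) := by
  induction j with
  | zero =>
    rw [hA1, hB1]
    constructor <;> norm_num [E0b]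
  | succ j ih =>
    have hsign := neg_one_pow_mul_neg_one_pow_div_two (M := ℝ)
    rw [hA (j + 1), hB (j + 1), ih.1, ih.2]
    simp only [lie_smul, lie_E12_E0b, E0b_add_two, smul_smul]
    constructor
    · match_scalars
      linear_combination 2 ^ (j + 1) * c0 ^ (j + 3) * d * hsign j
    · have hsign' : (-1 : ℝ) ^ (j + 1) * (-1) ^ ((j + 1) / 2) = -(-1) ^ (j / 2) := by
        rw [hsign, show (j + 1 + 1) / 2 = j / 2 + 1 by omega, pow_succ, mul_neg_one]
      rw [show (j + 1 + 1) / 2 = j / 2 + 1 by omega]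
      match_scalars
      linear_combination 2 ^ (j + 1) * c0 ^ (j + 3) * d * hsign'

abbrev Tensor (k : ℕ) :=
  MultilinearMap ℝ (fun _ : Fin (k + 2) => Fin 3 → ℝ) (Matrix (Fin 3) (Fin 3) ℝ)

noncomputable def e0Args (k : ℕ) (a b : Fin 3 → ℝ) : Fin (k + 2) → Fin 3 → ℝ :=
  fun j => if (j : ℕ) = k then a else if (j : ℕ) = k + 1 then b else e 0

theorem e0Args_zero (a b : Fin 3 → ℝ) : e0Args 0 a b = ![a, b] := by
  ext j : 1; fin_cases j <;> simp [e0Args]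

theorem e0Args_succ (k : ℕ) (a b : Fin 3 → ℝ) :
    e0Args (k + 1) a b = Fin.cons (e 0) (e0Args k a b) := by
  ext j : 1
  cases j using Fin.cases <;> simp [e0Args]

theorem e0Args_e0_left (k : ℕ) (b : Fin 3 → ℝ) :
    e0Args k (e 0) b = fun j : Fin (k + 2) => if (j : ℕ) = k + 1 then b else e 0 := by
  ext j : 1
  by_cases h : (j : ℕ) = k <;> simp [e0Args, h]

theorem update_e0Args_left (k : ℕ) (a b x : Fin 3 → ℝ) :
    Function.update (e0Args k a b) ⟨k, by omega⟩ x = e0Args k x b := by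
  ext j : 1
  rcases eq_or_ne j ⟨k, by omega⟩ with rfl | h
  · simp [e0Args]
  · simp [Function.update_of_ne h, e0Args, Fin.ext_iff.not.mp h]

theorem update_e0Args_right (k : ℕ) (a b x : Fin 3 → ℝ) :
    Function.update (e0Args k a b) ⟨k + 1, by omega⟩ x = e0Args k a x := by
  ext j : 1
  rcases eq_or_ne j ⟨k + 1, by omega⟩ with rfl | h
  · simp [e0Args]
  · simp [Function.update_of_ne h, e0Args, Fin.ext_iff.not.mp h]

theorem map_e0Args_smul_left {k : ℕ} (f : Tensor k) (c : ℝ) (a b : Fin 3 → ℝ) :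
    f (e0Args k (c • a) b) = c • f (e0Args k a b) := by
  rw [← update_e0Args_left k a b, f.map_update_smul, update_e0Args_left]

theorem map_e0Args_smul_right {k : ℕ} (f : Tensor k) (c : ℝ) (a b : Fin 3 → ℝ) :
    f (e0Args k a (c • b)) = c • f (e0Args k a b) := by
  rw [← update_e0Args_right k a b, f.map_update_smul, update_e0Args_right]

theorem map_e0Args_zero_left {k : ℕ} (f : Tensor k) (b : Fin 3 → ℝ) : f (e0Args k 0 b) = 0 :=
  f.map_coord_zero ⟨k, by omega⟩ (by simp [e0Args])

def DerivationRecursion (S : (Fin 3 → ℝ) →ₗ[ℝ] Matrix (Fin 3) (Fin 3) ℝ)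
    (R : (k : ℕ) → Tensor k) : Prop :=
  ∀ (k : ℕ) (X : Fin 3 → ℝ) (V : Fin (k + 2) → Fin 3 → ℝ),
    R (k + 1) (Fin.cons X V) =
      -((S X) * (R k V) - (R k V) * (S X)) +
        ∑ i : Fin (k + 2), R k (Function.update V i ((S X).mulVec (V i)))

section DerivationRecursion

variable {S : (Fin 3 → ℝ) →ₗ[ℝ] Matrix (Fin 3) (Fin 3) ℝ} {R : (k : ℕ) → Tensor k}

theorem DerivationRecursion.apply_e0Args_succ (hrec : DerivationRecursion S R)
    (hS : S (e 0) *ᵥ e 0 = 0) (k : ℕ) (a b : Fin 3 → ℝ) :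
    R (k + 1) (e0Args (k + 1) a b) =
      -⁅S (e 0), R k (e0Args k a b)⁆ + R k (e0Args k (S (e 0) *ᵥ a) b) +
        R k (e0Args k a (S (e 0) *ᵥ b)) := by
  have hne : (⟨k, by omega⟩ : Fin (k + 2)) ≠ ⟨k + 1, by omega⟩ := by simp [Fin.ext_iff]
  rw [e0Args_succ, hrec, Ring.lie_def, add_assoc,
    Finset.sum_eq_add_of_mem _ _ (Finset.mem_univ _) (Finset.mem_univ _) hne]
  · simp [e0Args, update_e0Args_left, update_e0Args_right]
  · rintro i - hi
    have hi' : e0Args k a b i = e 0 := by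
      simp [e0Args, Fin.ext_iff.not.mp hi.1, Fin.ext_iff.not.mp hi.2]
    rw [hi', hS, MultilinearMap.map_update_zero]

theorem DerivationRecursion.apply_e0Args_swap (hrec : DerivationRecursion S R)
    (hS : S (e 0) *ᵥ e 0 = 0) (hR0 : ∀ a b : Fin 3 → ℝ, R 0 ![a, b] = -R 0 ![b, a]) (k : ℕ)
    (a b : Fin 3 → ℝ) : R k (e0Args k a b) = -R k (e0Args k b a) := by
  induction k generalizing a b with
  | zero => rw [e0Args_zero, e0Args_zero, hR0]
  | succ k ih =>
    rw [hrec.apply_e0Args_succ hS, hrec.apply_e0Args_succ hS, ih a, ih _ b, ih a]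
    simp only [lie_neg]
    abel

theorem DerivationRecursion.apply_e0Args_self (hrec : DerivationRecursion S R)
    (hS : S (e 0) *ᵥ e 0 = 0) (hR0 : ∀ a b : Fin 3 → ℝ, R 0 ![a, b] = -R 0 ![b, a]) (k : ℕ)
    (a : Fin 3 → ℝ) : R k (e0Args k a a) = 0 := by
  have h := hrec.apply_e0Args_swap hS hR0 k a a
  rwa [eq_neg_iff_add_eq_zero, ← two_smul ℝ, smul_eq_zero, or_iff_right two_ne_zero] at h

end DerivationRecursion

section E12Rotation

variable {c0 : ℝ} {S : (Fin 3 → ℝ) →ₗ[ℝ] Matrix (Fin 3) (Fin 3) ℝ} {R : (k : ℕ) → Tensor k}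

theorem mulVec_e0_of_eq_smul_E12 (hS0 : S (e 0) = c0 • E12) : S (e 0) *ᵥ e 0 = 0 := by
  rw [hS0, smul_mulVec, E12_mulVec_e0, smul_zero]

theorem DerivationRecursion.apply_e0Args_e0_e1_succ (hrec : DerivationRecursion S R)
    (hS0 : S (e 0) = c0 • E12) (k : ℕ) :
    R (k + 1) (e0Args (k + 1) (e 0) (e 1)) =
      -c0 • ⁅E12, R k (e0Args k (e 0) (e 1))⁆ + c0 • R k (e0Args k (e 0) (e 2)) := by
  rw [hrec.apply_e0Args_succ (mulVec_e0_of_eq_smul_E12 hS0), hS0, smul_mulVec, smul_mulVec,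
    E12_mulVec_e0, E12_mulVec_e1, smul_zero, map_e0Args_zero_left, map_e0Args_smul_right,
    smul_lie, neg_smul, add_zero]

theorem DerivationRecursion.apply_e0Args_e0_e2_succ (hrec : DerivationRecursion S R)
    (hS0 : S (e 0) = c0 • E12) (k : ℕ) :
    R (k + 1) (e0Args (k + 1) (e 0) (e 2)) =
      -c0 • ⁅E12, R k (e0Args k (e 0) (e 2))⁆ - c0 • R k (e0Args k (e 0) (e 1)) := by
  rw [hrec.apply_e0Args_succ (mulVec_e0_of_eq_smul_E12 hS0), hS0, smul_mulVec, smul_mulVec,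
    E12_mulVec_e0, E12_mulVec_e2, smul_zero, map_e0Args_zero_left, smul_neg, ← neg_smul,
    map_e0Args_smul_right, smul_lie, neg_smul, neg_smul, add_zero, sub_eq_add_neg]

theorem DerivationRecursion.apply_e0Args_e1_e2_succ (hrec : DerivationRecursion S R)
    (hS0 : S (e 0) = c0 • E12) (hR0 : ∀ a b : Fin 3 → ℝ, R 0 ![a, b] = -R 0 ![b, a]) (k : ℕ) :
    R (k + 1) (e0Args (k + 1) (e 1) (e 2)) = -c0 • ⁅E12, R k (e0Args k (e 1) (e 2))⁆ := by
  have hS := mulVec_e0_of_eq_smul_E12 hS0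
  rw [hrec.apply_e0Args_succ hS, hS0, smul_mulVec, smul_mulVec, E12_mulVec_e1, E12_mulVec_e2,
    smul_neg, ← neg_smul, map_e0Args_smul_left, map_e0Args_smul_right,
    hrec.apply_e0Args_self hS hR0, hrec.apply_e0Args_self hS hR0, smul_zero, smul_zero, add_zero,
    add_zero, smul_lie, neg_smul]

end E12Rotation

theorem iterated_covariant_derivative_formula_general (c0 c1 c2 : ℝ)
    (S : (Fin 3 → ℝ) →ₗ[ℝ] Matrix (Fin 3) (Fin 3) ℝ)
    (hS0 : S (e 0) = c0 • E12)
    (R : (k : ℕ) → MultilinearMap ℝ (fun _ : Fin (k + 2) => Fin 3 → ℝ)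
      (Matrix (Fin 3) (Fin 3) ℝ))
    (hR0anti : ∀ Y1 Y2 : Fin 3 → ℝ, R 0 ![Y1, Y2] = -R 0 ![Y2, Y1])
    (h01 : R 0 ![e 0, e 1] = (-c0 * c1 + c1 * c2 + c0 * c2) • E01)
    (h12 : R 0 ![e 1, e 2] = (c0 * c1 - c1 * c2 + c0 * c2) • E12)
    (h02 : R 0 ![e 0, e 2] = (c0 * c1 + c1 * c2 - c0 * c2) • E02)
    (hrec : ∀ (k : ℕ) (X : Fin 3 → ℝ) (V : Fin (k + 2) → Fin 3 → ℝ),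
      R (k + 1) (Fin.cons X V) =
        -((S X) * (R k V) - (R k V) * (S X)) +
          ∑ i : Fin (k + 2), R k (Function.update V i ((S X).mulVec (V i)))) :
    ∀ k : ℕ, 1 ≤ k →
      (R k (fun j => if (j : ℕ) = k + 1 then e 1 else e 0) =
        ((-1 : ℝ) ^ ((k - 1) / 2) * 2 ^ k * c0 ^ (k + 1) * (c1 - c2)) •
          (if k % 2 = 1 then E02 else E01)) ∧
      (R k (fun j => if (j : ℕ) = k + 1 then e 2 else e 0) =
        ((-1 : ℝ) ^ (k / 2) * 2 ^ k * c0 ^ (k + 1) * (c1 - c2)) •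
          (if (k + 1) % 2 = 1 then E02 else E01)) ∧
      R k (fun j => if (j : ℕ) = k then e 1 else if (j : ℕ) = k + 1 then e 2 else e 0)
        = 0 := by
  have hrec : DerivationRecursion S R := hrec
  have hA := hrec.apply_e0Args_e0_e1_succ hS0
  have hB := hrec.apply_e0Args_e0_e2_succ hS0
  have hC := hrec.apply_e0Args_e1_e2_succ hS0 hR0anti
  have hA1 : R 1 (e0Args 1 (e 0) (e 1)) = (2 * c0 ^ 2 * (c1 - c2)) • E02 := by
    rw [hA 0, e0Args_zero, e0Args_zero, h01, h02, lie_smul, lie_E12_E01]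
    module
  have hB1 : R 1 (e0Args 1 (e 0) (e 2)) = (2 * c0 ^ 2 * (c1 - c2)) • E01 := by
    rw [hB 0, e0Args_zero, e0Args_zero, h01, h02, lie_smul, lie_E12_E02]
    module
  have hC_pos : ∀ j, R (j + 1) (e0Args (j + 1) (e 1) (e 2)) = 0 := by
    intro j
    induction j with
    | zero => rw [hC 0, e0Args_zero, h12, lie_smul, lie_self, smul_zero, smul_zero]
    | succ j ih => rw [hC (j + 1), ih, lie_zero, smul_zero]
  intro k hk
  obtain ⟨j, rfl⟩ := Nat.exists_eq_add_of_le' hk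
  obtain ⟨hAj, hBj⟩ := closed_form_of_rotation_recursion c0 (c1 - c2)
    (fun k => R k (e0Args k (e 0) (e 1))) (fun k => R k (e0Args k (e 0) (e 2))) hA hB hA1 hB1 j
  rw [Nat.add_sub_cancel, ← e0Args_e0_left, ← e0Args_e0_left]
  exact ⟨hAj, hBj, hC_pos j⟩

/-- Closed formula for the iterated derivation recursion
`R^{k+1}(X,V|·) = -(S(X)·R^k)(V|·)`.  The `k`-th tensor `R k` is a multilinear map in
`k+2` vector slots (the last two being the `Λ²ℝ³` slot); the derivation action of
`A ∈ so(3)` is `[A, P(V)] - Σᵢ P(..., A·Vᵢ, ...)`.  Here `b(k) = 1 + (k mod 2)`, so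
`E_{0,b(k)}` is `E₀₂` when `k` is odd and `E₀₁` when `k` is even. -/
theorem iterated_covariant_derivative_formula (c0 c1 c2 : ℝ)
    (S : (Fin 3 → ℝ) →ₗ[ℝ] Matrix (Fin 3) (Fin 3) ℝ)
    (hS0 : S (e 0) = c0 • E12) (hS1 : S (e 1) = -c1 • E02) (hS2 : S (e 2) = c2 • E01)
    (R : (k : ℕ) → MultilinearMap ℝ (fun _ : Fin (k + 2) => Fin 3 → ℝ)
      (Matrix (Fin 3) (Fin 3) ℝ))
    (hR0anti : ∀ Y1 Y2 : Fin 3 → ℝ, R 0 ![Y1, Y2] = -R 0 ![Y2, Y1])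
    (h01 : R 0 ![e 0, e 1] = (-c0 * c1 + c1 * c2 + c0 * c2) • E01)
    (h12 : R 0 ![e 1, e 2] = (c0 * c1 - c1 * c2 + c0 * c2) • E12)
    (h02 : R 0 ![e 0, e 2] = (c0 * c1 + c1 * c2 - c0 * c2) • E02)
    (hrec : ∀ (k : ℕ) (X : Fin 3 → ℝ) (V : Fin (k + 2) → Fin 3 → ℝ),
      R (k + 1) (Fin.cons X V) =
        -((S X) * (R k V) - (R k V) * (S X)) +
          ∑ i : Fin (k + 2), R k (Function.update V i ((S X).mulVec (V i)))) :
    ∀ k : ℕ, 1 ≤ k →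
      (R k (fun j => if (j : ℕ) = k + 1 then e 1 else e 0) =
        ((-1 : ℝ) ^ ((k - 1) / 2) * 2 ^ k * c0 ^ (k + 1) * (c1 - c2)) •
          (if k % 2 = 1 then E02 else E01)) ∧
      (R k (fun j => if (j : ℕ) = k + 1 then e 2 else e 0) =
        ((-1 : ℝ) ^ (k / 2) * 2 ^ k * c0 ^ (k + 1) * (c1 - c2)) •
          (if (k + 1) % 2 = 1 then E02 else E01)) ∧
      R k (fun j => if (j : ℕ) = k then e 1 else if (j : ℕ) = k + 1 then e 2 else e 0)
        = 0 :=
  iterated_covariant_derivative_formula_general c0 c1 c2 S hS0 R hR0anti h01 h12 h02 hrec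
end

section
/- Let ε^{(n)} → 0⁺ and λ_1^{(n)}, λ_2^{(n)} → λ^{(∞)} ∈ (0,∞) be sequences of positive reals, and let sec^{(n)} denote the three coordinate sectional curvatures of the left-invariant metric on SU(2) given by the diagonal values (ε^{(n)}, λ_1^{(n)}, λ_2^{(n)}) in the standard Milnor frame. Then the family {sec^{(n)}} is uniformly bounded if and only if there exists C > 0 with |λ_1^{(n)} - λ_2^{(n)}| ≤ C·ε^{(n)} for all n. -/
open Filter Topology

lemma abs_bound_of_tendsto (f : ℕ → ℝ) (a : ℝ) (h : Tendsto f atTop (𝓝 a)) :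
    ∃ K, ∀ n, |f n| ≤ K := by
  obtain ⟨K, hK⟩ := (h.abs.bddAbove_range)
  exact ⟨K, fun n => hK ⟨n, rfl⟩⟩

set_option maxHeartbeats 1600000 in
/-- Along sequences of diagonal left-invariant metrics on `SU(2)` with
`ε⁽ⁿ⁾ → 0⁺` and `λᵢ⁽ⁿ⁾ → λ ∈ (0,∞)`, the three coordinate sectional curvatures (given
by the explicit formulas below) are uniformly bounded if and only if
`|λ₁⁽ⁿ⁾ - λ₂⁽ⁿ⁾| ≤ C ε⁽ⁿ⁾` for some `C > 0`. -/
theorem bounded_curvature_iff_eigenvalue_pinching (ε l1 l2 : ℕ → ℝ) (lam : ℝ)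
    (hlam : 0 < lam)
    (hεpos : ∀ n, 0 < ε n) (hl1pos : ∀ n, 0 < l1 n) (hl2pos : ∀ n, 0 < l2 n)
    (hε : Tendsto ε atTop (𝓝 0))
    (h1 : Tendsto l1 atTop (𝓝 lam)) (h2 : Tendsto l2 atTop (𝓝 lam)) :
    (∃ M : ℝ, ∀ n,
      |1 / (l1 n * l2 n) * (ε n + 2 * (l2 n - l1 n)
          - (ε n)⁻¹ * (l2 n - l1 n) * (l1 n + 3 * l2 n))| ≤ M ∧
      |1 / (l1 n * l2 n) * (-3 * ε n + 2 * (l1 n + l2 n)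
          + (ε n)⁻¹ * (l2 n - l1 n) ^ 2)| ≤ M ∧
      |1 / (l1 n * l2 n) * (ε n - 2 * (l2 n - l1 n)
          + (ε n)⁻¹ * (l2 n - l1 n) * (l2 n + 3 * l1 n))| ≤ M) ↔
    (∃ C : ℝ, 0 < C ∧ ∀ n, |l1 n - l2 n| ≤ C * ε n) := by
  constructor
  · rintro ⟨M, hM⟩
    have hM0 : 0 ≤ M := le_trans (abs_nonneg _) (hM 0).1
    -- eventually l1 + l2 - ε ≥ lam and l1 * l2 ≤ 2 lam^2
    have hsum : Tendsto (fun n => l1 n + l2 n - ε n) atTop (𝓝 (lam + lam - 0)) :=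
      (h1.add h2).sub hε
    have hev1 : ∀ᶠ n in atTop, lam ≤ l1 n + l2 n - ε n := by
      exact hsum.eventually (eventually_ge_nhds (show lam < lam + lam - 0 by linarith))
    have hprod : Tendsto (fun n => l1 n * l2 n) atTop (𝓝 (lam * lam)) := h1.mul h2
    have hev2 : ∀ᶠ n in atTop, l1 n * l2 n ≤ 2 * lam ^ 2 := by
      exact hprod.eventually (eventually_le_nhds (show lam * lam < 2 * lam ^ 2 by nlinarith))
    obtain ⟨N, hN⟩ := (hev1.and hev2).exists_forall_of_atTop
    -- for n ≥ N : |l1 n - l2 n| ≤ (M * lam) * ε n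
    have key : ∀ n, N ≤ n → |l1 n - l2 n| ≤ (M * lam) * ε n := by
      intro n hn
      obtain ⟨hA, -, hC⟩ := hM n
      obtain ⟨hs, hp⟩ := hN n hn
      have hεn := hεpos n
      have hl1n := hl1pos n
      have hl2n := hl2pos n
      have hPn : 0 < l1 n * l2 n := mul_pos hl1n hl2n
      -- the difference of the two curvatures
      have hdiff :
          (1 / (l1 n * l2 n) * (ε n - 2 * (l2 n - l1 n)
              + (ε n)⁻¹ * (l2 n - l1 n) * (l2 n + 3 * l1 n)))
          - (1 / (l1 n * l2 n) * (ε n + 2 * (l2 n - l1 n)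
              - (ε n)⁻¹ * (l2 n - l1 n) * (l1 n + 3 * l2 n)))
          = 4 * (l2 n - l1 n) * ((l1 n + l2 n) - ε n) / ((l1 n * l2 n) * ε n) := by
        field_simp
        ring
      have h2M : |4 * (l2 n - l1 n) * ((l1 n + l2 n) - ε n) / ((l1 n * l2 n) * ε n)|
          ≤ 2 * M := by
        rw [← hdiff]
        calc _ ≤ |1 / (l1 n * l2 n) * (ε n - 2 * (l2 n - l1 n)
              + (ε n)⁻¹ * (l2 n - l1 n) * (l2 n + 3 * l1 n))|
            + |1 / (l1 n * l2 n) * (ε n + 2 * (l2 n - l1 n)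
              - (ε n)⁻¹ * (l2 n - l1 n) * (l1 n + 3 * l2 n))| := abs_sub _ _
          _ ≤ 2 * M := by linarith
      rw [abs_div, div_le_iff₀ (by positivity)] at h2M
      have habs : |(l1 n * l2 n) * ε n| = (l1 n * l2 n) * ε n := abs_of_pos (by positivity)
      rw [habs] at h2M
      have h4 : |4 * (l2 n - l1 n) * ((l1 n + l2 n) - ε n)|
          = 4 * |l1 n - l2 n| * ((l1 n + l2 n) - ε n) := by
        rw [abs_mul, abs_mul, abs_sub_comm (l2 n) (l1 n),
          abs_of_pos (show (0:ℝ) < 4 by norm_num),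
          abs_of_pos (show (0:ℝ) < (l1 n + l2 n) - ε n by linarith)]
      rw [h4] at h2M
      -- 4 |d| lam ≤ 4 |d| (l1+l2-ε) ≤ 2M * l1 l2 * ε ≤ 2M * 2lam² * ε
      have h5 : 4 * |l1 n - l2 n| * lam ≤ 2 * M * (2 * lam ^ 2 * ε n) := by
        have e1 : 4 * |l1 n - l2 n| * lam ≤ 4 * |l1 n - l2 n| * ((l1 n + l2 n) - ε n) := by
          have := abs_nonneg (l1 n - l2 n); nlinarith
        have e2 : 2 * M * ((l1 n * l2 n) * ε n) ≤ 2 * M * (2 * lam ^ 2 * ε n) := by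
          have : (l1 n * l2 n) * ε n ≤ 2 * lam ^ 2 * ε n := by nlinarith
          nlinarith
        linarith
      nlinarith
    -- combine with initial segment
    set C : ℝ := 1 + M * lam + ∑ i ∈ Finset.range N, |l1 i - l2 i| / ε i with hCdef
    have hsnn : ∀ i ∈ Finset.range N, (0:ℝ) ≤ |l1 i - l2 i| / ε i := fun i _ =>
      div_nonneg (abs_nonneg _) (hεpos i).le
    have hsum0 : (0:ℝ) ≤ ∑ i ∈ Finset.range N, |l1 i - l2 i| / ε i :=
      Finset.sum_nonneg hsnn
    have hCpos : 0 < C := by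
      have : 0 ≤ M * lam := mul_nonneg hM0 hlam.le
      simp only [hCdef]; linarith
    refine ⟨C, hCpos, fun n => ?_⟩
    rcases le_or_gt N n with hn | hn
    · calc |l1 n - l2 n| ≤ (M * lam) * ε n := key n hn
        _ ≤ C * ε n := by
          have : M * lam ≤ C := by simp only [hCdef]; linarith
          nlinarith [hεpos n]
    · have hmem : n ∈ Finset.range N := Finset.mem_range.2 hn
      have hle : |l1 n - l2 n| / ε n ≤ ∑ i ∈ Finset.range N, |l1 i - l2 i| / ε i :=
        Finset.single_le_sum hsnn hmem
      have : |l1 n - l2 n| / ε n ≤ C := by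
        have : 0 ≤ M * lam := mul_nonneg hM0 hlam.le
        simp only [hCdef]; linarith
      calc |l1 n - l2 n| = (|l1 n - l2 n| / ε n) * ε n := by
            rw [div_mul_cancel₀ _ (hεpos n).ne']
        _ ≤ C * ε n := by nlinarith [hεpos n]
  · rintro ⟨C, hC, hd⟩
    obtain ⟨Ke, hKe⟩ := abs_bound_of_tendsto ε 0 hε
    obtain ⟨K1, hK1⟩ := abs_bound_of_tendsto l1 lam h1
    obtain ⟨K2, hK2⟩ := abs_bound_of_tendsto l2 lam h2
    have hPlim : Tendsto (fun n => (l1 n * l2 n)⁻¹) atTop (𝓝 (lam * lam)⁻¹) :=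
      (h1.mul h2).inv₀ (by positivity)
    obtain ⟨Kp, hKp⟩ := abs_bound_of_tendsto _ _ hPlim
    have hKe0 : 0 ≤ Ke := le_trans (abs_nonneg _) (hKe 0)
    have hK10 : 0 ≤ K1 := le_trans (abs_nonneg _) (hK1 0)
    have hK20 : 0 ≤ K2 := le_trans (abs_nonneg _) (hK2 0)
    have hKp0 : 0 ≤ Kp := le_trans (abs_nonneg _) (hKp 0)
    refine ⟨Kp * (Ke + 2 * (C * Ke) + C * (K1 + 3 * K2))
      + Kp * (3 * Ke + 2 * (K1 + K2) + C * (C * Ke))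
      + Kp * (Ke + 2 * (C * Ke) + C * (K2 + 3 * K1)), fun n => ?_⟩
    have hεn := hεpos n
    have hl1n := hl1pos n
    have hl2n := hl2pos n
    have hεle : ε n ≤ Ke := le_trans (le_abs_self _) (hKe n)
    have hl1le : l1 n ≤ K1 := le_trans (le_abs_self _) (hK1 n)
    have hl2le : l2 n ≤ K2 := le_trans (le_abs_self _) (hK2 n)
    have hPle : |1 / (l1 n * l2 n)| ≤ Kp := by
      rw [one_div]; exact hKp n
    have hdn : |l2 n - l1 n| ≤ C * ε n := by rw [abs_sub_comm]; exact hd n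
    have hdKe : |l2 n - l1 n| ≤ C * Ke := le_trans hdn (by nlinarith)
    have hinv : (ε n)⁻¹ * |l2 n - l1 n| ≤ C := by
      rw [inv_mul_le_iff₀ hεn]; linarith [hdn]
    have hd0 : 0 ≤ |l2 n - l1 n| := abs_nonneg _
    have hinv0 : 0 ≤ (ε n)⁻¹ := (inv_pos.2 hεn).le
    have hCKe : 0 ≤ C * Ke := mul_nonneg hC.le hKe0
    have hCCKe : 0 ≤ C * (C * Ke) := mul_nonneg hC.le hCKe
    have hB1nn : (0:ℝ) ≤ Ke + 2 * (C * Ke) + C * (K1 + 3 * K2) := by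
      nlinarith [mul_nonneg hC.le (show (0:ℝ) ≤ K1 + 3 * K2 by linarith)]
    have hB2nn : (0:ℝ) ≤ 3 * Ke + 2 * (K1 + K2) + C * (C * Ke) := by linarith
    have hB3nn : (0:ℝ) ≤ Ke + 2 * (C * Ke) + C * (K2 + 3 * K1) := by
      nlinarith [mul_nonneg hC.le (show (0:ℝ) ≤ K2 + 3 * K1 by linarith)]
    refine ⟨?_, ?_, ?_⟩
    · rw [abs_mul]
      have hX : |ε n + 2 * (l2 n - l1 n) - (ε n)⁻¹ * (l2 n - l1 n) * (l1 n + 3 * l2 n)|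
          ≤ Ke + 2 * (C * Ke) + C * (K1 + 3 * K2) := by
        calc _ ≤ |ε n + 2 * (l2 n - l1 n)| + |(ε n)⁻¹ * (l2 n - l1 n) * (l1 n + 3 * l2 n)| :=
              abs_sub _ _
          _ ≤ (|ε n| + |2 * (l2 n - l1 n)|) + |(ε n)⁻¹ * (l2 n - l1 n) * (l1 n + 3 * l2 n)| := by
              linarith [abs_add_le (ε n) (2 * (l2 n - l1 n))]
          _ ≤ Ke + 2 * (C * Ke) + C * (K1 + 3 * K2) := by
              rw [abs_mul, abs_mul, abs_mul]
              rw [abs_of_pos hεn, abs_of_pos (show (0:ℝ) < 2 by norm_num),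
                abs_of_pos (show (0:ℝ) < l1 n + 3 * l2 n by linarith),
                abs_of_pos (inv_pos.2 hεn)]
              have e1 : (ε n)⁻¹ * |l2 n - l1 n| * (l1 n + 3 * l2 n) ≤ C * (K1 + 3 * K2) :=
                le_trans (mul_le_mul_of_nonneg_right hinv (by linarith))
                  (mul_le_mul_of_nonneg_left (by linarith) hC.le)
              linarith [e1, hεle, hdKe]
      have := mul_le_mul hPle hX (abs_nonneg _) hKp0
      linarith [this, mul_nonneg hKp0 hB2nn, mul_nonneg hKp0 hB3nn]
    · rw [abs_mul]
      have hX : |-3 * ε n + 2 * (l1 n + l2 n) + (ε n)⁻¹ * (l2 n - l1 n) ^ 2|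
          ≤ 3 * Ke + 2 * (K1 + K2) + C * (C * Ke) := by
        calc _ ≤ |-3 * ε n + 2 * (l1 n + l2 n)| + |(ε n)⁻¹ * (l2 n - l1 n) ^ 2| :=
              abs_add_le _ _
          _ ≤ (|(-3 : ℝ) * ε n| + |2 * (l1 n + l2 n)|) + |(ε n)⁻¹ * (l2 n - l1 n) ^ 2| := by
              linarith [abs_add_le ((-3:ℝ) * ε n) (2 * (l1 n + l2 n))]
          _ ≤ 3 * Ke + 2 * (K1 + K2) + C * (C * Ke) := by
              rw [abs_mul, abs_mul, abs_mul, ← pow_abs]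
              rw [abs_of_pos hεn, abs_of_pos (show (0:ℝ) < 2 by norm_num),
                abs_of_pos (show (0:ℝ) < l1 n + l2 n by linarith),
                abs_of_pos (inv_pos.2 hεn),
                (show |(-3:ℝ)| = 3 by norm_num)]
              have e2 : (ε n)⁻¹ * |l2 n - l1 n| ^ 2 ≤ C * (C * Ke) := by
                have heq : (ε n)⁻¹ * |l2 n - l1 n| ^ 2
                    = ((ε n)⁻¹ * |l2 n - l1 n|) * |l2 n - l1 n| := by ring
                rw [heq]
                exact le_trans (mul_le_mul_of_nonneg_right hinv hd0)
                  (mul_le_mul_of_nonneg_left hdKe hC.le)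
              linarith [e2, hεle, hl1le, hl2le]
      have := mul_le_mul hPle hX (abs_nonneg _) hKp0
      linarith [this, mul_nonneg hKp0 hB1nn, mul_nonneg hKp0 hB3nn]
    · rw [abs_mul]
      have hX : |ε n - 2 * (l2 n - l1 n) + (ε n)⁻¹ * (l2 n - l1 n) * (l2 n + 3 * l1 n)|
          ≤ Ke + 2 * (C * Ke) + C * (K2 + 3 * K1) := by
        calc _ ≤ |ε n - 2 * (l2 n - l1 n)| + |(ε n)⁻¹ * (l2 n - l1 n) * (l2 n + 3 * l1 n)| :=
              abs_add_le _ _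
          _ ≤ (|ε n| + |2 * (l2 n - l1 n)|) + |(ε n)⁻¹ * (l2 n - l1 n) * (l2 n + 3 * l1 n)| := by
              linarith [abs_sub (ε n) (2 * (l2 n - l1 n))]
          _ ≤ Ke + 2 * (C * Ke) + C * (K2 + 3 * K1) := by
              rw [abs_mul, abs_mul, abs_mul]
              rw [abs_of_pos hεn, abs_of_pos (show (0:ℝ) < 2 by norm_num),
                abs_of_pos (show (0:ℝ) < l2 n + 3 * l1 n by linarith),
                abs_of_pos (inv_pos.2 hεn)]
              have e1 : (ε n)⁻¹ * |l2 n - l1 n| * (l2 n + 3 * l1 n) ≤ C * (K2 + 3 * K1) :=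
                le_trans (mul_le_mul_of_nonneg_right hinv (by linarith))
                  (mul_le_mul_of_nonneg_left (by linarith) hC.le)
              linarith [e1, hεle, hdKe]
      have := mul_le_mul hPle hX (abs_nonneg _) hKp0
      linarith [this, mul_nonneg hKp0 hB1nn, mul_nonneg hKp0 hB2nn]
end

section
/- Let ε^{(n)} → 0⁺ and λ_1^{(n)}, λ_2^{(n)} → 1 be positive sequences with |λ_1^{(n)} - λ_2^{(n)}|/(ε^{(n)})^{k/2} → 0 for k = 0,1,2 (regularity index at least 2). Then the coordinate sectional curvatures of the corresponding left-invariant metrics on SU(2) satisfy sec^{(n)}(e_0∧e_1) → 0, sec^{(n)}(e_1∧e_2) → 4, and sec^{(n)}(e_0∧e_2) → 0 as n → ∞. Conversely, if these three limits hold, then the regularity index is at least 2. -/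
/-!
Write `f = ε⁻¹ (l₂ - l₁)`. Each coordinate sectional curvature is a rational expression in
`ε`, `l₁`, `l₂` and `f`, continuous at `(0, 1, 1, 0)` with value `(0, 4, 0)` there, so `f → 0`
gives the limits. Conversely `l₁ l₂ sec(e₀∧e₁) = ε + 2(l₂ - l₁) - f (l₁ + 3l₂)` and
`l₁ + 3l₂ → 4`, so `sec(e₀∧e₁) → 0` alone forces `f → 0`. Finally, for `ε → 0⁺` the
regularity index is at least `2` exactly when `f → 0`, because
`|l₁ - l₂| / ε^s = |f| ε^(1-s)` and `ε^(1-s)` stays bounded for `s ≤ 1`.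
-/

open Filter Topology

section RegularityIndex

variable {ι : Type*} {l : Filter ι} {ε d : ι → ℝ}

theorem tendsto_abs_div_rpow_of_tendsto_inv_mul (hεpos : ∀ i, 0 < ε i)
    (hε : Tendsto ε l (𝓝 0)) (hd : Tendsto (fun i => (ε i)⁻¹ * d i) l (𝓝 0))
    {s : ℝ} (hs : s ≤ 1) :
    Tendsto (fun i => |d i| / ε i ^ s) l (𝓝 0) := by
  have hpow : Tendsto (fun i => ε i ^ (1 - s)) l (𝓝 ((0 : ℝ) ^ (1 - s))) :=
    hε.rpow_const (Or.inr (sub_nonneg.2 hs))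
  have hlim := hd.abs.mul hpow
  rw [abs_zero, zero_mul] at hlim
  refine hlim.congr fun i => ?_
  have hεi := hεpos i
  rw [Real.rpow_sub hεi, Real.rpow_one, abs_mul, abs_inv, abs_of_pos hεi]
  field_simp

theorem regularityIndex_ge_two_iff (hεpos : ∀ i, 0 < ε i) (hε : Tendsto ε l (𝓝 0)) :
    (∀ k : ℕ, k ≤ 2 → Tendsto (fun i => |d i| / ε i ^ ((k : ℝ) / 2)) l (𝓝 0)) ↔
      Tendsto (fun i => (ε i)⁻¹ * d i) l (𝓝 0) := by
  refine ⟨fun h => ?_, fun hd k hk => tendsto_abs_div_rpow_of_tendsto_inv_mul hεpos hε hd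
    (by rw [div_le_one two_pos]; exact_mod_cast hk)⟩
  rw [tendsto_zero_iff_abs_tendsto_zero]
  refine (h 2 le_rfl).congr fun i => ?_
  rw [Function.comp_apply, abs_mul, abs_inv, abs_of_pos (hεpos i), inv_mul_eq_div]
  norm_num

end RegularityIndex

noncomputable section SectionalCurvature

def sec01 (ε l₁ l₂ : ℝ) : ℝ :=
  1 / (l₁ * l₂) * (ε + 2 * (l₂ - l₁) - ε⁻¹ * (l₂ - l₁) * (l₁ + 3 * l₂))

def sec12 (ε l₁ l₂ : ℝ) : ℝ :=
  1 / (l₁ * l₂) * (-3 * ε + 2 * (l₁ + l₂) + ε⁻¹ * (l₂ - l₁) ^ 2)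

def sec02 (ε l₁ l₂ : ℝ) : ℝ :=
  1 / (l₁ * l₂) * (ε - 2 * (l₂ - l₁) + ε⁻¹ * (l₂ - l₁) * (l₂ + 3 * l₁))

theorem mul_sec01 {ε l₁ l₂ : ℝ} (h : l₁ * l₂ ≠ 0) :
    l₁ * l₂ * sec01 ε l₁ l₂ = ε + 2 * (l₂ - l₁) - ε⁻¹ * (l₂ - l₁) * (l₁ + 3 * l₂) := by
  rw [sec01, ← mul_assoc, mul_one_div_cancel h, one_mul]

variable {ι : Type*} {F : Filter ι} {ε l₁ l₂ : ι → ℝ}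

theorem tendsto_one_div_mul (h₁ : Tendsto l₁ F (𝓝 1)) (h₂ : Tendsto l₂ F (𝓝 1)) :
    Tendsto (fun i => 1 / (l₁ i * l₂ i)) F (𝓝 1) := by
  simpa [one_div] using (h₁.mul h₂).inv₀ (by norm_num)

theorem tendsto_sec01 (hε : Tendsto ε F (𝓝 0)) (h₁ : Tendsto l₁ F (𝓝 1))
    (h₂ : Tendsto l₂ F (𝓝 1)) (hf : Tendsto (fun i => (ε i)⁻¹ * (l₂ i - l₁ i)) F (𝓝 0)) :
    Tendsto (fun i => sec01 (ε i) (l₁ i) (l₂ i)) F (𝓝 0) := by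
  simpa [sec01] using (tendsto_one_div_mul h₁ h₂).mul
    ((hε.add ((h₂.sub h₁).const_mul 2)).sub (hf.mul (h₁.add (h₂.const_mul 3))))

theorem tendsto_sec12 (hε : Tendsto ε F (𝓝 0)) (h₁ : Tendsto l₁ F (𝓝 1))
    (h₂ : Tendsto l₂ F (𝓝 1)) (hf : Tendsto (fun i => (ε i)⁻¹ * (l₂ i - l₁ i)) F (𝓝 0)) :
    Tendsto (fun i => sec12 (ε i) (l₁ i) (l₂ i)) F (𝓝 4) := by
  have hlim := (tendsto_one_div_mul h₁ h₂).mul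
    (((hε.const_mul (-3)).add ((h₁.add h₂).const_mul 2)).add (hf.mul (h₂.sub h₁)))
  norm_num at hlim
  exact hlim.congr fun i => by rw [sec12]; ring

theorem tendsto_sec02 (hε : Tendsto ε F (𝓝 0)) (h₁ : Tendsto l₁ F (𝓝 1))
    (h₂ : Tendsto l₂ F (𝓝 1)) (hf : Tendsto (fun i => (ε i)⁻¹ * (l₂ i - l₁ i)) F (𝓝 0)) :
    Tendsto (fun i => sec02 (ε i) (l₁ i) (l₂ i)) F (𝓝 0) := by
  simpa [sec02] using (tendsto_one_div_mul h₁ h₂).mul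
    ((hε.sub ((h₂.sub h₁).const_mul 2)).add (hf.mul (h₂.add (h₁.const_mul 3))))

theorem tendsto_inv_mul_sub_of_tendsto_sec01 (hε : Tendsto ε F (𝓝 0))
    (h₁ : Tendsto l₁ F (𝓝 1)) (h₂ : Tendsto l₂ F (𝓝 1))
    (hsec : Tendsto (fun i => sec01 (ε i) (l₁ i) (l₂ i)) F (𝓝 0)) :
    Tendsto (fun i => (ε i)⁻¹ * (l₂ i - l₁ i)) F (𝓝 0) := by
  have hP : Tendsto (fun i => l₁ i * l₂ i) F (𝓝 1) := by simpa using h₁.mul h₂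
  have hS : Tendsto (fun i => l₁ i + 3 * l₂ i) F (𝓝 4) := by
    convert h₁.add (h₂.const_mul 3) using 2; norm_num
  have hprod : Tendsto (fun i => (ε i)⁻¹ * (l₂ i - l₁ i) * (l₁ i + 3 * l₂ i)) F (𝓝 0) := by
    have hlim := (hε.add ((h₂.sub h₁).const_mul 2)).sub (hP.mul hsec)
    norm_num at hlim
    refine hlim.congr' ((hP.eventually_ne one_ne_zero).mono fun i hi => ?_)
    rw [mul_sec01 hi]
    ring
  have hlim := hprod.div hS (by norm_num)
  rw [zero_div] at hlim
  exact hlim.congr' ((hS.eventually_ne (by norm_num)).mono fun i hi =>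
    mul_div_cancel_right₀ _ hi)

end SectionalCurvature

theorem sec_limits_iff_regularity_index_ge_two_general (ε l1 l2 : ℕ → ℝ)
    (hεpos : ∀ n, 0 < ε n)
    (hε : Tendsto ε atTop (𝓝 0))
    (h1 : Tendsto l1 atTop (𝓝 1)) (h2 : Tendsto l2 atTop (𝓝 1)) :
    (∀ k : ℕ, k ≤ 2 →
      Tendsto (fun n => |l1 n - l2 n| / (ε n) ^ ((k : ℝ) / 2)) atTop (𝓝 0)) ↔
    (Tendsto (fun n => 1 / (l1 n * l2 n) * (ε n + 2 * (l2 n - l1 n)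
        - (ε n)⁻¹ * (l2 n - l1 n) * (l1 n + 3 * l2 n))) atTop (𝓝 0) ∧
     Tendsto (fun n => 1 / (l1 n * l2 n) * (-3 * ε n + 2 * (l1 n + l2 n)
        + (ε n)⁻¹ * (l2 n - l1 n) ^ 2)) atTop (𝓝 4) ∧
     Tendsto (fun n => 1 / (l1 n * l2 n) * (ε n - 2 * (l2 n - l1 n)
        + (ε n)⁻¹ * (l2 n - l1 n) * (l2 n + 3 * l1 n))) atTop (𝓝 0)) := by
  have hindex := regularityIndex_ge_two_iff (d := fun n => l2 n - l1 n) hεpos hε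
  simp only [abs_sub_comm (l2 _)] at hindex
  rw [hindex]
  exact ⟨fun hf => ⟨tendsto_sec01 hε h1 h2 hf, tendsto_sec12 hε h1 h2 hf,
    tendsto_sec02 hε h1 h2 hf⟩,
    fun hsec => tendsto_inv_mul_sub_of_tendsto_sec01 hε h1 h2 hsec.1⟩

/-- For an almost-Berger sequence (`ε⁽ⁿ⁾ → 0⁺`, `λᵢ⁽ⁿ⁾ → 1`), the
regularity index is at least `2` (i.e. `(ε⁽ⁿ⁾)^{-k/2}|λ₁⁽ⁿ⁾-λ₂⁽ⁿ⁾| → 0` for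
`k = 0, 1, 2`) if and only if the coordinate sectional curvatures converge to
`(0, 4, 0)`. -/
theorem sec_limits_iff_regularity_index_ge_two (ε l1 l2 : ℕ → ℝ)
    (hεpos : ∀ n, 0 < ε n) (hl1pos : ∀ n, 0 < l1 n) (hl2pos : ∀ n, 0 < l2 n)
    (hε : Tendsto ε atTop (𝓝 0))
    (h1 : Tendsto l1 atTop (𝓝 1)) (h2 : Tendsto l2 atTop (𝓝 1)) :
    (∀ k : ℕ, k ≤ 2 →
      Tendsto (fun n => |l1 n - l2 n| / (ε n) ^ ((k : ℝ) / 2)) atTop (𝓝 0)) ↔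
    (Tendsto (fun n => 1 / (l1 n * l2 n) * (ε n + 2 * (l2 n - l1 n)
        - (ε n)⁻¹ * (l2 n - l1 n) * (l1 n + 3 * l2 n))) atTop (𝓝 0) ∧
     Tendsto (fun n => 1 / (l1 n * l2 n) * (-3 * ε n + 2 * (l1 n + l2 n)
        + (ε n)⁻¹ * (l2 n - l1 n) ^ 2)) atTop (𝓝 4) ∧
     Tendsto (fun n => 1 / (l1 n * l2 n) * (ε n - 2 * (l2 n - l1 n)
        + (ε n)⁻¹ * (l2 n - l1 n) * (l2 n + 3 * l1 n))) atTop (𝓝 0)) :=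
  sec_limits_iff_regularity_index_ge_two_general ε l1 l2 hεpos hε h1 h2
end

section
/- Let γ(t) be a geodesic in a Riemannian manifold with γ(0) = p, and let J(t) be a Jacobi field along γ with J(0) = 0 and J'(0) = w (covariant derivative along γ). Denote by J^{(k)}(0) the k-th covariant derivative of J along γ at t = 0 and set R(t)(·) = -Rm(γ'(t) ∧ ·)γ'(t). Then J^{(2)}(0) = 0, and the sequence of polynomials P_k defined by P_1(a^0) = a^0, P_2(a^0,a^1) = 2a^1, P_k(a^0,...,a^{k-1}) = k·a^{k-1} + Σ_{i=1}^{k-2} C(k, i+2)·a^{k-2-i}·P_i(a^0,...,a^{i-1}) satisfies J^{(k+2)}(0) = P_k(R(0), R'(0), ..., R^{(k-1)}(0))·w for every integer k ≥ 1, where R^{(j)} denotes the j-th covariant derivative of the operator t ↦ R(t) along γ. -/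
/-- The polynomials `P_k` in the (noncommuting) operator variables `a⁰, a¹, …`:
`P₁(a⁰) = a⁰`, `P₂(a⁰,a¹) = 2a¹`, and
`P_k = k·a^{k-1} + Σ_{i=1}^{k-2} C(k, i+2)·a^{k-2-i}·P_i`. -/
noncomputable def Pder {E : Type*} [AddCommGroup E] [Module ℝ E] :
    ℕ → (ℕ → (E →ₗ[ℝ] E)) → (E →ₗ[ℝ] E)
  | 0, _ => 0
  | 1, a => a 0
  | 2, a => (2 : ℕ) • a 1
  | (k + 3), a => (k + 3) • a (k + 2) +
      ∑ i ∈ (Finset.Icc 1 (k + 1)).attach,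
        (Nat.choose (k + 3) (i.1 + 2)) • ((a (k + 1 - i.1)) ∘ₗ Pder i.1 a)
  decreasing_by
    have hi := i.2
    simp only [Finset.mem_Icc] at hi
    omega

/-- Let `J` be a Jacobi field along a geodesic `γ` with `J(0) = 0`,
`J'(0) = w`, and let `R(t) = -Rm(γ'∧·)γ'`.  Encoding the covariant derivatives of `J`
and of `R` along `γ` at `t = 0` by sequences `J k` and `R k`, the iterated Jacobi
equation (obtained from `J'' = R(J)` by the Leibniz rule) gives `J⁽²⁾(0) = 0` and
`J^{(k+2)}(0) = P_k(R(0), …, R^{(k-1)}(0)) w` for all `k ≥ 1`. -/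
theorem jacobi_field_derivatives {E : Type*} [AddCommGroup E] [Module ℝ E]
    (J : ℕ → E) (R : ℕ → (E →ₗ[ℝ] E)) (w : E)
    (hJ0 : J 0 = 0) (hJ1 : J 1 = w)
    (hJacobi : ∀ k : ℕ,
      J (k + 2) = ∑ i ∈ Finset.range (k + 1), (Nat.choose k i) • (R i) (J (k - i))) :
    J 2 = 0 ∧ ∀ k : ℕ, 1 ≤ k → J (k + 2) = Pder k R w := by
  have key : ∀ k : ℕ, J (k + 2) = Pder k R w := by
    intro k
    induction k using Nat.strong_induction_on with
    | _ k ih =>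
      match k with
      | 0 => simp [hJacobi 0, hJ0, Pder]
      | 1 =>
        rw [hJacobi 1]
        simp [Finset.sum_range_succ, hJ0, hJ1, Pder]
      | 2 =>
        have h2 : J 2 = 0 := by simp [hJacobi 0, hJ0]
        rw [hJacobi 2]
        simp [Finset.sum_range_succ, hJ0, hJ1, h2, Pder]
      | (k+3) =>
        rw [hJacobi (k+3), Finset.sum_range_succ, Finset.sum_range_succ]
        have e1 : k + 3 - (k + 3) = 0 := by omega
        have e2 : k + 3 - (k + 2) = 1 := by omega
        rw [e1, e2, hJ0, hJ1]
        have hsum : ∑ i ∈ Finset.range (k+2), (Nat.choose (k+3) i) • (R i) (J (k+3-i))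
            = ∑ i ∈ Finset.range (k+2), (Nat.choose (k+3) i) • (R i) (Pder (k+1-i) R w) := by
          refine Finset.sum_congr rfl fun i hi => ?_
          simp only [Finset.mem_range] at hi
          have h3 : k + 3 - i = (k + 1 - i) + 2 := by omega
          rw [h3, ih (k+1-i) (by omega)]
        rw [hsum]
        have hP : Pder (k+3) R = (k + 3) • R (k + 2) +
            ∑ i ∈ (Finset.Icc 1 (k + 1)).attach,
              (Nat.choose (k + 3) (i.1 + 2)) • ((R (k + 1 - i.1)) ∘ₗ Pder i.1 R) := by
          rw [Pder]
        rw [hP, Finset.sum_attach (Finset.Icc 1 (k+1))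
          (fun i => (Nat.choose (k + 3) (i + 2)) • ((R (k + 1 - i)) ∘ₗ Pder i R))]
        simp only [LinearMap.add_apply, LinearMap.smul_apply, LinearMap.sum_apply,
          LinearMap.comp_apply]
        have hmain : ∑ i ∈ Finset.range (k+2), (Nat.choose (k+3) i) • (R i) (Pder (k+1-i) R w)
            = ∑ i ∈ Finset.Icc 1 (k+1),
                (Nat.choose (k+3) (i+2)) • (R (k+1-i)) (Pder i R w) := by
          rw [Finset.sum_range_succ]
          have hz : Pder (k+1-(k+1)) R = 0 := by
            have : k + 1 - (k + 1) = 0 := by omega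
            rw [this, Pder]
          rw [hz]
          simp only [LinearMap.zero_apply, map_zero, smul_zero, add_zero]
          refine Finset.sum_nbij' (fun i => k + 1 - i) (fun j => k + 1 - j)
            ?_ ?_ ?_ ?_ ?_
          · intro a ha
            simp only [Finset.mem_range] at ha
            simp only [Finset.mem_Icc]
            omega
          · intro a ha
            simp only [Finset.mem_Icc] at ha
            simp only [Finset.mem_range]
            omega
          · intro a ha
            simp only [Finset.mem_range] at ha
            show k + 1 - (k + 1 - a) = a
            omega
          · intro a ha
            simp only [Finset.mem_Icc] at ha
            show k + 1 - (k + 1 - a) = a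
            omega
          · intro a ha
            simp only [Finset.mem_range] at ha
            have h1 : k + 1 - (k + 1 - a) = a := by omega
            have h2 : (k+3).choose ((k+1-a) + 2) = (k+3).choose a := by
              rw [show (k+1-a) + 2 = (k+3) - a by omega]
              exact Nat.choose_symm (by omega)
            rw [h1, h2]
        rw [hmain]
        have hc : (k+3).choose (k+2) = k + 3 := Nat.choose_succ_self_right (k+2)
        rw [hc]
        simp only [Nat.choose_self, one_smul, map_zero, smul_zero, add_zero]
        abel
  refine ⟨by simpa [Pder] using key 0, fun k _ => key k⟩
end
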